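/- arXiv:1409.5922 — 4 statements merged into one kernel-verified Lean document; each statement's English description precedes it below -/
import Mathlib

section
/- In the square grid on ℤ², any dominating set X has upper density at least 1/5: limsup_{r→∞} |X ∩ B_r(0)| / |B_r(0)| ≥ 1/5. -/
open Filter

/-- The ℓ¹-ball of radius `r` around a vertex of the square grid `ℤ²`. -/
def gridBall (v : ℤ × ℤ) (r : ℕ) : Set (ℤ × ℤ) :=
  {p | |p.1 - v.1| + |p.2 - v.2| ≤ (r : ℤ)}

/-- The closed neighborhood of a vertex of the square grid. -/
def gridNbhd (v : ℤ × ℤ) : Set (ℤ × ℤ) :=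
  {v, (v.1 + 1, v.2), (v.1 - 1, v.2), (v.1, v.2 + 1), (v.1, v.2 - 1)}

/-- The open neighborhood of a vertex of the square grid. -/
def gridOpenNbhd (v : ℤ × ℤ) : Set (ℤ × ℤ) :=
  {(v.1 + 1, v.2), (v.1 - 1, v.2), (v.1, v.2 + 1), (v.1, v.2 - 1)}

/-- Upper density of a set of grid vertices with respect to ℓ¹-balls around 0. -/
noncomputable def upperDensity (X : Set (ℤ × ℤ)) : ℝ :=
  Filter.limsup
    (fun r : ℕ => ((X ∩ gridBall 0 r).ncard : ℝ) / ((gridBall 0 r).ncard)) Filter.atTop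

/-!
Every vertex of `X` dominates at most five vertices, and every vertex of `B_r(0)` is dominated
by a vertex of `X ∩ B_{r+1}(0)`; hence `5 |X ∩ B_{r+1}(0)| ≥ |B_r(0)|`. Since
`|B_r(0)| = (r + 1)² + r²`, the ratio `|B_r(0)| / |B_{r+1}(0)|` tends to `1`, so the densities
along the balls are bounded below by `(1 - 2/(r + 1)) / 5 → 1/5`.
-/

lemma abs_add_abs_le_iff {a b c : ℤ} :
    |a| + |b| ≤ c ↔ a + b ≤ c ∧ a - b ≤ c ∧ b - a ≤ c ∧ -a - b ≤ c := by
  have := le_abs_self a; have := neg_abs_le a; have := le_abs_self b; have := neg_abs_le b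
  rcases abs_choice a with ha | ha <;> rcases abs_choice b with hb | hb <;> omega

def rotCoords (c : ℤ) (p : ℤ × ℤ) : ℤ × ℤ := (p.1 - p.2, p.1 + p.2 - c)

lemma rotCoords_injective (c : ℤ) : Function.Injective (rotCoords c) := by
  rintro ⟨a, b⟩ ⟨a', b'⟩ h
  simp only [rotCoords, Prod.mk.injEq] at h ⊢
  omega

open Finset in
/-- The points of `B_r(0)` with `x + y + r` even and odd form two squares of sides `r + 1`
and `r` in rotated coordinates. -/
lemma gridBall_zero_eq (r : ℕ) : gridBall 0 r =
    ↑((Icc 0 (r : ℤ) ×ˢ Icc 0 (r : ℤ)).image (rotCoords r) ∪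
      (Ico 0 (r : ℤ) ×ˢ Ico 0 (r : ℤ)).image (rotCoords (r - 1))) := by
  ext ⟨x, y⟩
  simp only [gridBall, rotCoords, Set.mem_ofPred_eq, Prod.fst_zero, Prod.snd_zero, sub_zero,
    abs_add_abs_le_iff, coe_union, coe_image, coe_product, coe_Icc, coe_Ico, Set.mem_union,
    Set.mem_image, Set.mem_prod, Set.mem_Icc, Set.mem_Ico, Prod.exists, Prod.mk.injEq]
  constructor
  · intro h
    rcases Int.emod_two_eq_zero_or_one (x + y + r) with hp | hp
    · exact Or.inl ⟨(x + y + r) / 2, (y - x + r) / 2, by omega⟩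
    · exact Or.inr ⟨(x + y + r - 1) / 2, (y - x + r - 1) / 2, by omega⟩
  · rintro (⟨a, b, h, rfl, rfl⟩ | ⟨a, b, h, rfl, rfl⟩) <;> omega

open Finset in
lemma ncard_gridBall_zero (r : ℕ) : (gridBall 0 r).ncard = 2 * r ^ 2 + 2 * r + 1 := by
  have hdisj : Disjoint ((Icc 0 (r : ℤ) ×ˢ Icc 0 (r : ℤ)).image (rotCoords r))
      ((Ico 0 (r : ℤ) ×ˢ Ico 0 (r : ℤ)).image (rotCoords (r - 1))) := by
    simp only [disjoint_left, mem_image, Prod.exists, rotCoords, not_exists]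
    rintro _ ⟨a, b, -, rfl⟩ c d ⟨-, h⟩
    rw [Prod.mk.injEq] at h
    omega
  rw [gridBall_zero_eq, Set.ncard_coe_finset, card_union_of_disjoint hdisj,
    card_image_of_injective _ (rotCoords_injective _),
    card_image_of_injective _ (rotCoords_injective _), card_product, card_product,
    Int.card_Icc, Int.card_Ico, sub_zero, sub_zero,
    show ((r : ℤ) + 1).toNat = r + 1 by omega, Int.toNat_natCast]
  ring

lemma gridBall_zero_finite (r : ℕ) : (gridBall 0 r).Finite := by
  rw [gridBall_zero_eq]
  exact Finset.finite_toSet _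

lemma mem_gridNbhd_comm {u v : ℤ × ℤ} : u ∈ gridNbhd v ↔ v ∈ gridNbhd u := by
  obtain ⟨a, b⟩ := u
  obtain ⟨c, d⟩ := v
  simp only [gridNbhd, Set.mem_insert_iff, Set.mem_singleton_iff, Prod.mk.injEq]
  omega

lemma gridNbhd_finite (v : ℤ × ℤ) : (gridNbhd v).Finite := by
  rw [gridNbhd]
  exact Set.toFinite _

lemma ncard_gridNbhd_le (v : ℤ × ℤ) : (gridNbhd v).ncard ≤ 5 := by
  refine (Set.ncard_insert_le _ _).trans ?_
  refine Nat.succ_le_succ <| (Set.ncard_insert_le _ _).trans ?_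
  refine Nat.succ_le_succ <| (Set.ncard_insert_le _ _).trans ?_
  refine Nat.succ_le_succ <| (Set.ncard_insert_le _ _).trans ?_
  rw [Set.ncard_singleton]

lemma gridNbhd_subset_gridBall_succ {v : ℤ × ℤ} {r : ℕ} (hv : v ∈ gridBall 0 r) :
    gridNbhd v ⊆ gridBall 0 (r + 1) := by
  obtain ⟨a, b⟩ := v
  intro p hp
  simp only [gridNbhd, Set.mem_insert_iff, Set.mem_singleton_iff] at hp
  simp only [gridBall, Set.mem_ofPred_eq, Prod.fst_zero, Prod.snd_zero, sub_zero,
    abs_add_abs_le_iff] at hv ⊢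
  rcases hp with rfl | rfl | rfl | rfl | rfl <;> push_cast <;> omega

lemma Set.ncard_le_mul_ncard_of_subset_biUnion {α β : Type*} {S : Set β} {T : Set α}
    {N : α → Set β} {k : ℕ} (hT : T.Finite) (hN : ∀ t ∈ T, (N t).Finite)
    (hk : ∀ t ∈ T, (N t).ncard ≤ k) (hS : S ⊆ ⋃ t ∈ T, N t) : S.ncard ≤ k * T.ncard := by
  lift T to Finset α using hT
  calc S.ncard ≤ (⋃ t ∈ T, N t).ncard := Set.ncard_le_ncard hS (T.finite_toSet.biUnion hN)
    _ ≤ ∑ t ∈ T, (N t).ncard := T.set_ncard_biUnion_le N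
    _ ≤ ∑ _t ∈ T, k := Finset.sum_le_sum hk
    _ = k * (T : Set α).ncard := by
      rw [Finset.sum_const, smul_eq_mul, mul_comm, Set.ncard_coe_finset]

lemma ncard_gridBall_le_five_mul {X : Set (ℤ × ℤ)} {r : ℕ}
    (hX : ∀ v ∈ gridBall 0 r, (gridNbhd v ∩ X).Nonempty) :
    (gridBall 0 r).ncard ≤ 5 * (X ∩ gridBall 0 (r + 1)).ncard := by
  refine Set.ncard_le_mul_ncard_of_subset_biUnion ((gridBall_zero_finite _).inter_of_right X)
    (fun t _ => gridNbhd_finite t) (fun t _ => ncard_gridNbhd_le t) fun v hv => ?_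
  obtain ⟨x, hxv, hxX⟩ := hX v hv
  exact Set.mem_biUnion ⟨hxX, gridNbhd_subset_gridBall_succ hv hxv⟩ (mem_gridNbhd_comm.1 hxv)

noncomputable def ballDensity (X : Set (ℤ × ℤ)) (r : ℕ) : ℝ :=
  ((X ∩ gridBall 0 r).ncard : ℝ) / (gridBall 0 r).ncard

lemma ballDensity_le_one (X : Set (ℤ × ℤ)) (r : ℕ) : ballDensity X r ≤ 1 :=
  div_le_one_of_le₀ (mod_cast Set.ncard_inter_le_ncard_right _ _ (gridBall_zero_finite r))
    (Nat.cast_nonneg _)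

lemma one_sub_div_le_ballDensity_succ {X : Set (ℤ × ℤ)} {r : ℕ}
    (hX : ∀ v ∈ gridBall 0 r, (gridNbhd v ∩ X).Nonempty) :
    (1 - 2 / ((r : ℝ) + 1)) / 5 ≤ ballDensity X (r + 1) := by
  have h5 : (2 * r ^ 2 + 2 * r + 1 : ℝ) ≤ 5 * (X ∩ gridBall 0 (r + 1)).ncard := by
    exact_mod_cast ncard_gridBall_zero r ▸ ncard_gridBall_le_five_mul hX
  rw [ballDensity, ncard_gridBall_zero, le_div_iff₀ (by positivity),
    show 1 - 2 / ((r : ℝ) + 1) = (r - 1) / (r + 1) by field_simp; ring,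
    div_div, div_mul_eq_mul_div, div_le_iff₀ (by positivity)]
  push_cast
  nlinarith

/-- Any dominating set of the square grid has upper density at least `1/5`. -/
theorem stmt_8 (X : Set (ℤ × ℤ)) (hX : ∀ v : ℤ × ℤ, (gridNbhd v ∩ X).Nonempty) :
    (1 : ℝ) / 5 ≤ upperDensity X := by
  have hlim : Tendsto (fun r : ℕ => (1 - 2 / ((r : ℝ) + 1)) / 5) atTop (nhds (1 / 5)) := by
    simpa using ((tendsto_const_div_atTop_nhds_zero_nat (2 : ℝ)).comp
      (tendsto_add_atTop_nat 1)).const_sub 1 |>.div_const 5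
  have hbdd : IsBoundedUnder (· ≤ ·) atTop (fun r => ballDensity X (r + 1)) :=
    isBoundedUnder_of ⟨1, fun r => ballDensity_le_one X (r + 1)⟩
  calc (1 : ℝ) / 5 = limsup (fun r : ℕ => (1 - 2 / ((r : ℝ) + 1)) / 5) atTop :=
        hlim.limsup_eq.symm
    _ ≤ limsup (fun r => ballDensity X (r + 1)) atTop :=
      limsup_le_limsup
        (Eventually.of_forall fun _ => one_sub_div_le_ballDensity_succ fun v _ => hX v)
        hlim.isCoboundedUnder_le hbdd
    _ = upperDensity X := limsup_nat_add (ballDensity X) 1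
end

section
/- In the square grid on ℤ², any identifying code X has upper density at least 3/10. -/
open Filter

/-
Every vertex `v` of the ball `B_r` has a codeword in `N[v]`, and since the traces `N[v] ∩ X` are
distinct, each codeword `c` is the only codeword of `N[v]` for at most one `v`. Hence
`∑_{v ∈ B_r} |N[v] ∩ X| ≥ 2|B_r| - |X ∩ B_{r+1}|`, while double counting bounds the same sum by
`5 |X ∩ B_{r+1}|`, since `c ∈ N[v]` iff `v ∈ N[c]`. So `|X ∩ B_{r+1}| ≥ |B_r| / 3`, and because
`|B_{r+1}| - |B_r| = O(r)` while `|B_r| ≥ r²`, the density ratio exceeds `3/10` for `r ≥ 41`.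
-/

open Finset

section SeparatingFamily

variable {V : Type*} [DecidableEq V] (N : V → Finset V) (S C : Finset V)

theorem sum_card_inter_le (k : ℕ) (hdeg : ∀ c ∈ C, #{v ∈ S | c ∈ N v} ≤ k) :
    ∑ v ∈ S, #(N v ∩ C) ≤ k * #C := by
  have hcount := sum_card_bipartiteAbove_eq_sum_card_bipartiteBelow (s := S) (t := C)
    (r := fun v c => c ∈ N v)
  simp only [bipartiteAbove, bipartiteBelow, filter_mem_eq_inter, inter_comm C] at hcount
  rw [hcount, mul_comm]
  exact sum_le_card_nsmul C _ k hdeg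

theorem card_filter_card_inter_eq_one_le (hsep : Set.InjOn (fun v => N v ∩ C) S) :
    #{v ∈ S | #(N v ∩ C) = 1} ≤ #C := by
  calc #{v ∈ S | #(N v ∩ C) = 1}
      = #(image (fun v => N v ∩ C) {v ∈ S | #(N v ∩ C) = 1}) :=
        (card_image_of_injOn (hsep.mono (by simp +contextual [Set.subset_def]))).symm
    _ ≤ #(powersetCard 1 C) := card_le_card fun s hs => by
        obtain ⟨v, hv, rfl⟩ := mem_image.1 hs
        exact mem_powersetCard.2 ⟨inter_subset_right, (mem_filter.1 hv).2⟩
    _ = #C := by simp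

theorem two_mul_card_le_succ_mul_card (k : ℕ) (hdeg : ∀ c ∈ C, #{v ∈ S | c ∈ N v} ≤ k)
    (hdom : ∀ v ∈ S, (N v ∩ C).Nonempty) (hsep : Set.InjOn (fun v => N v ∩ C) S) :
    2 * #S ≤ (k + 1) * #C := by
  have hpointwise : ∀ v ∈ S, 2 ≤ #(N v ∩ C) + if #(N v ∩ C) = 1 then 1 else 0 := by
    intro v hv
    have := (hdom v hv).card_pos
    split_ifs <;> omega
  calc 2 * #S = ∑ v ∈ S, 2 := by rw [sum_const, smul_eq_mul, mul_comm]
    _ ≤ ∑ v ∈ S, (#(N v ∩ C) + if #(N v ∩ C) = 1 then 1 else 0) := sum_le_sum hpointwise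
    _ = ∑ v ∈ S, #(N v ∩ C) + #{v ∈ S | #(N v ∩ C) = 1} := by
        rw [sum_add_distrib, sum_boole, Nat.cast_id]
    _ ≤ k * #C + #C :=
        add_le_add (sum_card_inter_le N S C k hdeg) (card_filter_card_inter_eq_one_le N S C hsep)
    _ = (k + 1) * #C := by ring

end SeparatingFamily

noncomputable def ballFinset (r : ℕ) : Finset (ℤ × ℤ) :=
  {p ∈ Icc (-(r : ℤ)) r ×ˢ Icc (-(r : ℤ)) r | |p.1| + |p.2| ≤ r}

theorem mem_ballFinset {p : ℤ × ℤ} {r : ℕ} : p ∈ ballFinset r ↔ |p.1| + |p.2| ≤ r := by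
  simp only [ballFinset, mem_filter, mem_product, mem_Icc, and_iff_right_iff_imp]
  intro h
  have := abs_nonneg p.1; have := abs_nonneg p.2
  exact ⟨abs_le.1 (by linarith), abs_le.1 (by linarith)⟩

theorem coe_ballFinset (r : ℕ) : (ballFinset r : Set (ℤ × ℤ)) = gridBall 0 r := by
  ext p; simp [mem_ballFinset, gridBall]

def nbhdFinset (v : ℤ × ℤ) : Finset (ℤ × ℤ) :=
  {v, (v.1 + 1, v.2), (v.1 - 1, v.2), (v.1, v.2 + 1), (v.1, v.2 - 1)}

theorem coe_nbhdFinset (v : ℤ × ℤ) : (nbhdFinset v : Set (ℤ × ℤ)) = gridNbhd v := by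
  simp [nbhdFinset, gridNbhd]

theorem mem_nbhdFinset {p v : ℤ × ℤ} : p ∈ nbhdFinset v ↔ |p.1 - v.1| + |p.2 - v.2| ≤ 1 := by
  simp only [nbhdFinset, mem_insert, mem_singleton, Prod.ext_iff, Int.abs_eq_natAbs]
  omega

theorem mem_nbhdFinset_comm {p v : ℤ × ℤ} : p ∈ nbhdFinset v ↔ v ∈ nbhdFinset p := by
  simp only [mem_nbhdFinset, abs_sub_comm]

theorem card_nbhdFinset_le (v : ℤ × ℤ) : #(nbhdFinset v) ≤ 5 := card_le_five

theorem nbhdFinset_subset_ballFinset {v : ℤ × ℤ} {r : ℕ} (hv : v ∈ ballFinset r) :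
    nbhdFinset v ⊆ ballFinset (r + 1) := by
  intro p hp
  rw [mem_nbhdFinset] at hp
  rw [mem_ballFinset] at hv ⊢
  push_cast
  have h1 := abs_sub_abs_le_abs_sub p.1 v.1
  have h2 := abs_sub_abs_le_abs_sub p.2 v.2
  linarith

theorem card_ballFinset_le_three_mul (X : Set (ℤ × ℤ)) [DecidablePred (· ∈ X)]
    (hdom : ∀ v, (gridNbhd v ∩ X).Nonempty)
    (hsep : ∀ u v, u ≠ v → gridNbhd u ∩ X ≠ gridNbhd v ∩ X) (r : ℕ) :
    #(ballFinset r) ≤ 3 * #{c ∈ ballFinset (r + 1) | c ∈ X} := by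
  set C := {c ∈ ballFinset (r + 1) | c ∈ X}
  have htrace : ∀ v ∈ ballFinset r, (↑(nbhdFinset v ∩ C) : Set (ℤ × ℤ)) = gridNbhd v ∩ X := by
    intro v hv
    rw [← coe_nbhdFinset]
    ext p
    simp only [C, coe_inter, coe_filter, Set.mem_inter_iff, mem_coe, Set.mem_ofPred_eq]
    exact and_congr_right fun hp => and_iff_right (nbhdFinset_subset_ballFinset hv hp)
  have := two_mul_card_le_succ_mul_card nbhdFinset (ballFinset r) C 5 ?_ ?_ ?_
  · omega
  · intro c _
    calc #{v ∈ ballFinset r | c ∈ nbhdFinset v} ≤ #(nbhdFinset c) :=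
          card_le_card fun v hv => mem_nbhdFinset_comm.1 (mem_filter.1 hv).2
      _ ≤ 5 := card_nbhdFinset_le c
  · intro v hv
    exact_mod_cast (htrace v hv).symm ▸ hdom v
  · intro u hu v hv huv
    by_contra hne
    exact hsep u v hne (by rw [← htrace u hu, ← htrace v hv]; exact congrArg _ huv)

theorem mul_self_le_card_ballFinset (r : ℕ) : r * r ≤ #(ballFinset r) := by
  set s := Icc (-((r / 2 : ℕ) : ℤ)) (r / 2 : ℕ)
  have hsquare : s ×ˢ s ⊆ ballFinset r := fun p hp => by
    simp only [s, mem_product, mem_Icc] at hp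
    rw [mem_ballFinset, Int.abs_eq_natAbs, Int.abs_eq_natAbs]
    omega
  have hs : r ≤ #s := by simp only [s, Int.card_Icc]; omega
  calc r * r ≤ #s * #s := Nat.mul_le_mul hs hs
    _ = #(s ×ˢ s) := (card_product s s).symm
    _ ≤ #(ballFinset r) := card_le_card hsquare

theorem card_ballFinset_succ_le (r : ℕ) :
    #(ballFinset (r + 1)) ≤ #(ballFinset r) + 2 * (2 * r + 3) := by
  -- the sphere of radius `r + 1` lies on the two graphs `y = ±(r + 1 - |x|)`
  set I := Icc (-((r + 1 : ℕ) : ℤ)) (r + 1 : ℕ)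
  set upper := I.image fun x => (x, (r + 1 : ℤ) - |x|)
  set lower := I.image fun x => (x, |x| - (r + 1 : ℤ))
  have hcover : ballFinset (r + 1) ⊆ ballFinset r ∪ upper ∪ lower := fun p hp => by
    obtain ⟨x, y⟩ := p
    simp only [upper, lower, I, mem_union, mem_image, mem_Icc, Prod.mk.injEq, mem_ballFinset,
      Int.abs_eq_natAbs] at hp ⊢
    by_cases hx : x.natAbs + y.natAbs ≤ r
    · exact Or.inl (Or.inl (by omega))
    · rcases le_total 0 y with hy | hy
      · exact Or.inl (Or.inr ⟨x, by omega, rfl, by omega⟩)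
      · exact Or.inr ⟨x, by omega, rfl, by omega⟩
  have hI : #I = 2 * r + 3 := by simp only [I, Int.card_Icc]; omega
  calc #(ballFinset (r + 1)) ≤ #(ballFinset r ∪ upper ∪ lower) := card_le_card hcover
    _ ≤ #(ballFinset r) + #upper + #lower :=
        (card_union_le _ _).trans (Nat.add_le_add_right (card_union_le _ _) _)
    _ ≤ #(ballFinset r) + #I + #I := by gcongr <;> exact card_image_le
    _ = #(ballFinset r) + 2 * (2 * r + 3) := by omega

theorem ncard_inter_gridBall (X : Set (ℤ × ℤ)) [DecidablePred (· ∈ X)] (r : ℕ) :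
    (X ∩ gridBall 0 r).ncard = #{c ∈ ballFinset r | c ∈ X} := by
  rw [← coe_ballFinset, Set.inter_comm, ← Set.ncard_coe_finset, coe_filter]
  rfl

theorem ncard_gridBall_pos (r : ℕ) : 0 < (gridBall 0 r).ncard := by
  rw [← coe_ballFinset, Set.ncard_coe_finset, card_pos]
  exact ⟨0, by simp [mem_ballFinset]⟩

theorem three_mul_card_ballFinset_le (X : Set (ℤ × ℤ)) [DecidablePred (· ∈ X)]
    (hdom : ∀ v, (gridNbhd v ∩ X).Nonempty)
    (hsep : ∀ u v, u ≠ v → gridNbhd u ∩ X ≠ gridNbhd v ∩ X) {r : ℕ} (hr : 41 ≤ r) :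
    3 * #(ballFinset r) ≤ 10 * #{c ∈ ballFinset r | c ∈ X} := by
  obtain ⟨r, rfl⟩ : ∃ s, r = s + 1 := ⟨r - 1, by omega⟩
  have hcode := card_ballFinset_le_three_mul X hdom hsep r
  have hgrowth := card_ballFinset_succ_le r
  have hsize := mul_self_le_card_ballFinset r
  have : 40 * r ≤ r * r := Nat.mul_le_mul_right r (by omega)
  omega

/-- Any identifying code of the square grid has upper density at least `3/10`. -/
theorem stmt_10 (X : Set (ℤ × ℤ))
    (h1 : ∀ v : ℤ × ℤ, (gridNbhd v ∩ X).Nonempty)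
    (h2 : ∀ u v : ℤ × ℤ, u ≠ v → gridNbhd u ∩ X ≠ gridNbhd v ∩ X) :
    (3 : ℝ) / 10 ≤ upperDensity X := by
  classical
  have hratio : ∀ᶠ r : ℕ in atTop,
      (3 : ℝ) / 10 ≤ ((X ∩ gridBall 0 r).ncard : ℝ) / (gridBall 0 r).ncard := by
    filter_upwards [eventually_ge_atTop 41] with r hr
    rw [div_le_div_iff₀ (by norm_num) (mod_cast ncard_gridBall_pos r), mul_comm _ (10 : ℝ),
      ncard_inter_gridBall, ← coe_ballFinset, Set.ncard_coe_finset]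
    exact_mod_cast three_mul_card_ballFinset_le X h1 h2 hr
  have hbounded : IsBoundedUnder (· ≤ ·) atTop
      fun r : ℕ => ((X ∩ gridBall 0 r).ncard : ℝ) / (gridBall 0 r).ncard :=
    isBoundedUnder_of ⟨1, fun r => div_le_one_of_le₀
      (mod_cast Set.ncard_le_ncard Set.inter_subset_right (coe_ballFinset r ▸ finite_toSet _))
      (Nat.cast_nonneg _)⟩
  exact le_limsup_of_frequently_le hratio.frequently hbounded
end

section
/- Suppose G is an amenable grid, X ⊆ V(G), and μ' : V(G) → ℝ is obtained from the indicator function μ of X by a (c,d)-local discharging function among vertices only (i.e., μ'(v) = μ(v) + Σ_u D(u,v) where D is antisymmetric, |D(u,v)| ≤ c, and D(u,v) = 0 whenever dist(u,v) > d). If μ'(v) ≥ w for all vertices v, then the upper density of X is at least w. -/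
/-!
Sum the final charge over the ball `B_r`. Exchanges between two vertices of `B_r` cancel by
antisymmetry, and exchanges with vertices outside `B_{r+d}` vanish by locality, so
`w |B_r| ≤ |X ∩ B_r| + C |B_{r+d} \ B_r|`, where `C = c (Δ + 1)^d` bounds the total that one
vertex can send into `B_r` (it has at most `(Δ + 1)^d` partners within distance `d`).
Amenability makes the last term `o(|B_r|)`.
-/

open Filter

/-- The ball of radius `r` around `v` in graph distance. -/
def gBall {V : Type*} (G : SimpleGraph V) (v : V) (r : ℕ) : Set V :=
  {w | G.dist w v ≤ r}

open Finset

section Discharging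

variable {α : Type*} {D : α → α → ℝ}

theorem sum_sum_eq_zero_of_antisymm (hanti : ∀ u v, D u v = -D v u) (S : Finset α) :
    ∑ v ∈ S, ∑ u ∈ S, D u v = 0 := by
  have hneg : ∑ v ∈ S, ∑ u ∈ S, D u v = -∑ v ∈ S, ∑ u ∈ S, D u v :=
    calc ∑ v ∈ S, ∑ u ∈ S, D u v = ∑ u ∈ S, ∑ v ∈ S, D u v := sum_comm
      _ = ∑ u ∈ S, ∑ v ∈ S, -D v u := sum_congr rfl fun u _ ↦ sum_congr rfl fun v _ ↦ hanti u v
      _ = -∑ v ∈ S, ∑ u ∈ S, D u v := by simp only [sum_neg_distrib]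
  linarith

theorem mul_card_le_sum_add_of_discharging [DecidableEq α] {S T : Finset α} (hST : S ⊆ T)
    (μ : α → ℝ) {w C : ℝ} (hanti : ∀ u v, D u v = -D v u) (hout : ∀ u, ∑ v ∈ S, D u v ≤ C)
    (hcharge : ∀ v ∈ S, w ≤ μ v + ∑ u ∈ T, D u v) :
    w * #S ≤ ∑ v ∈ S, μ v + C * #(T \ S) := by
  calc w * #S = ∑ _v ∈ S, w := by rw [sum_const, nsmul_eq_mul, mul_comm]
    _ ≤ ∑ v ∈ S, (μ v + ∑ u ∈ T, D u v) := sum_le_sum hcharge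
    _ = ∑ v ∈ S, μ v + ∑ v ∈ S, ∑ u ∈ T \ S, D u v := by
      simp only [← sum_sdiff hST, sum_add_distrib, sum_sum_eq_zero_of_antisymm hanti, add_zero]
    _ = ∑ v ∈ S, μ v + ∑ u ∈ T \ S, ∑ v ∈ S, D u v := by rw [sum_comm]
    _ ≤ ∑ v ∈ S, μ v + ∑ _u ∈ T \ S, C := by gcongr with u; exact hout u
    _ = ∑ v ∈ S, μ v + C * #(T \ S) := by rw [sum_const, nsmul_eq_mul, mul_comm]

end Discharging

section Ball

variable {V : Type*} {G : SimpleGraph V} {u v x : V} {r s : ℕ}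

@[simp]
theorem mem_gBall : x ∈ gBall G v r ↔ G.dist x v ≤ r := Iff.rfl

theorem mem_gBall_self : v ∈ gBall G v r := by simp

theorem gBall_mono (h : r ≤ s) : gBall G v r ⊆ gBall G v s := fun _ hx ↦ hx.trans h

theorem gBall_zero (hc : G.Connected) : gBall G v 0 = {v} := by
  ext x; simp [hc.dist_eq_zero_iff]

theorem neighborSet_subset_gBall_one : G.neighborSet v ⊆ gBall G v 1 := fun x hx ↦ by
  simp [SimpleGraph.dist_eq_one_iff_adj.mpr ((G.mem_neighborSet v x).mp hx).symm]

theorem gBall_succ_subset (u : V) (k : ℕ) :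
    gBall G u (k + 1) ⊆ ⋃ y ∈ insert u (G.neighborSet u), gBall G y k := by
  intro x hx
  simp only [Set.mem_iUnion, exists_prop]
  by_cases h0 : G.dist u x = 0
  · exact ⟨u, Set.mem_insert _ _, by simp [SimpleGraph.dist_comm, h0]⟩
  obtain ⟨p, hp⟩ := SimpleGraph.exists_walk_of_dist_ne_zero h0
  cases p with
  | nil => simp at h0
  | @cons _ y _ hadj q =>
    refine ⟨y, Set.mem_insert_of_mem _ hadj, ?_⟩
    have : q.length + 1 ≤ k + 1 := by
      rw [← SimpleGraph.Walk.length_cons hadj, hp, SimpleGraph.dist_comm]; exact hx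
    rw [mem_gBall, SimpleGraph.dist_comm]
    exact (SimpleGraph.dist_le q).trans (by omega)

theorem ncard_gBall_le_pow (hc : G.Connected) (hfin : ∀ v r, (gBall G v r).Finite) {Δ : ℕ}
    (hdeg : ∀ v, (G.neighborSet v).ncard ≤ Δ) (u : V) (k : ℕ) :
    (gBall G u k).ncard ≤ (Δ + 1) ^ k := by
  induction k generalizing u with
  | zero => simp [gBall_zero hc]
  | succ k ih =>
    classical
    have hN : (insert u (G.neighborSet u)).Finite :=
      ((hfin u 1).subset neighborSet_subset_gBall_one).insert u
    calc (gBall G u (k + 1)).ncard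
        ≤ (⋃ y ∈ hN.toFinset, gBall G y k).ncard := by
          refine Set.ncard_le_ncard ?_ ?_
          · simpa using gBall_succ_subset u k
          · exact Set.Finite.biUnion hN.toFinset.finite_toSet fun y _ ↦ hfin y k
      _ ≤ ∑ y ∈ hN.toFinset, (gBall G y k).ncard := hN.toFinset.set_ncard_biUnion_le _
      _ ≤ #hN.toFinset * (Δ + 1) ^ k := sum_le_card_nsmul _ _ _ fun y _ ↦ ih y
      _ ≤ (Δ + 1) * (Δ + 1) ^ k := by
          gcongr
          rw [← Set.ncard_eq_toFinset_card _ hN]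
          exact (Set.ncard_insert_le _ _).trans (by simpa using hdeg u)
      _ = (Δ + 1) ^ (k + 1) := by ring

end Ball

section LocalDischarging

variable {V : Type*} {G : SimpleGraph V} {D : V → V → ℝ} {c : ℝ} {d : ℕ}

theorem sum_le_mul_pow_of_local (hc : G.Connected) (hfin : ∀ v r, (gBall G v r).Finite) {Δ : ℕ}
    (hdeg : ∀ v, (G.neighborSet v).ncard ≤ Δ) (hbound : ∀ u v, |D u v| ≤ c)
    (hlocal : ∀ u v, d < G.dist u v → D u v = 0) (S : Finset V) (u : V) :
    ∑ v ∈ S, D u v ≤ c * (Δ + 1) ^ d := by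
  classical
  have hc0 : 0 ≤ c := (abs_nonneg _).trans (hbound u u)
  have hcard : #{v ∈ S | v ∈ gBall G u d} ≤ (Δ + 1) ^ d := by
    refine le_trans ?_ (ncard_gBall_le_pow hc hfin hdeg u d)
    rw [← Set.ncard_coe_finset]
    exact Set.ncard_le_ncard (by intro v; simp +contextual) (hfin u d)
  calc ∑ v ∈ S, D u v = ∑ v ∈ S with v ∈ gBall G u d, D u v := by
        refine (sum_filter_of_ne fun v _ hne ↦ ?_).symm
        rw [mem_gBall, SimpleGraph.dist_comm]
        exact not_lt.mp (mt (hlocal u v) hne)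
    _ ≤ ∑ v ∈ S with v ∈ gBall G u d, c :=
        sum_le_sum fun v _ ↦ (le_abs_self _).trans (hbound u v)
    _ = #{v ∈ S | v ∈ gBall G u d} * c := by rw [sum_const, nsmul_eq_mul]
    _ ≤ c * (Δ + 1) ^ d := by
        rw [mul_comm]; gcongr; exact_mod_cast hcard

theorem finsum_eq_sum_gBall (hc : G.Connected) (hlocal : ∀ u v, d < G.dist u v → D u v = 0)
    {v₀ v : V} {r : ℕ} (hv : v ∈ gBall G v₀ r) (hT : (gBall G v₀ (r + d)).Finite) :
    ∑ᶠ u, D u v = ∑ u ∈ hT.toFinset, D u v := by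
  refine finsum_eq_sum_of_support_subset _ fun u hu ↦ ?_
  have huv : G.dist u v ≤ d := not_lt.mp (mt (hlocal u v) hu)
  simp only [Set.Finite.coe_toFinset, mem_gBall] at hv ⊢
  have := hc.dist_triangle (u := u) (v := v) (w := v₀)
  omega

theorem mul_ncard_gBall_le_add_boundary (hc : G.Connected)
    (hfin : ∀ v r, (gBall G v r).Finite) {Δ : ℕ} (hdeg : ∀ v, (G.neighborSet v).ncard ≤ Δ)
    (X : Set V) {w : ℝ}
    (hanti : ∀ u v, D u v = -D v u) (hbound : ∀ u v, |D u v| ≤ c)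
    (hlocal : ∀ u v, d < G.dist u v → D u v = 0)
    (hcharge : ∀ v, w ≤ X.indicator (fun _ ↦ (1 : ℝ)) v + ∑ᶠ u, D u v) (v₀ : V) (r : ℕ) :
    w * (gBall G v₀ r).ncard ≤
      (X ∩ gBall G v₀ r).ncard + c * (Δ + 1) ^ d * (gBall G v₀ (r + d) \ gBall G v₀ r).ncard := by
  classical
  set S := (hfin v₀ r).toFinset
  set T := (hfin v₀ (r + d)).toFinset
  have hST : S ⊆ T := Set.Finite.toFinset_subset_toFinset.mpr (gBall_mono (Nat.le_add_right r d))
  have key := mul_card_le_sum_add_of_discharging hST (X.indicator fun _ ↦ 1) hanti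
    (sum_le_mul_pow_of_local hc hfin hdeg hbound hlocal S) fun v hv ↦
      (hcharge v).trans_eq (by rw [finsum_eq_sum_gBall hc hlocal (by simpa [S] using hv)])
  have hX : ((X ∩ gBall G v₀ r).ncard : ℝ) = ∑ v ∈ S, X.indicator (fun _ ↦ 1) v := by
    rw [sum_indicator_eq_sum_filter, sum_const, nsmul_one, ← Set.ncard_coe_finset]
    congr 2; ext; simp [S, and_comm]
  rwa [Set.ncard_eq_toFinset_card _ (hfin v₀ r), hX,
    Set.ncard_eq_toFinset_card _ ((hfin v₀ (r + d)).sdiff),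
    Set.Finite.toFinset_sdiff (hfin v₀ (r + d)) (hfin v₀ r)]

end LocalDischarging

theorem le_limsup_of_le_add_of_tendsto_zero {ι : Type*} {l : Filter ι} [l.NeBot] {f g : ι → ℝ}
    {w : ℝ} (hf : IsBoundedUnder (· ≤ ·) l f) (hg : Tendsto g l (nhds 0))
    (h : ∀ᶠ i in l, w ≤ f i + g i) : w ≤ limsup f l := by
  refine le_of_forall_pos_le_add fun ε hε ↦ ?_
  have hfreq : ∀ᶠ i in l, w - ε ≤ f i := by
    filter_upwards [h, hg.eventually_lt_const hε] with i hi hgi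
    linarith
  linarith [le_limsup_of_frequently_le hfreq.frequently hf]

/-- A `(c,d)`-local discharging function among vertices which leaves every
vertex with charge at least `w` certifies that the upper density of `X` is at
least `w`. -/
theorem stmt_15 {V : Type*} (G : SimpleGraph V) (hc : G.Connected)
    (hfin : ∀ (v : V) (r : ℕ), (gBall G v r).Finite)
    (Δ : ℕ) (hdeg : ∀ v : V, (G.neighborSet v).ncard ≤ Δ)
    (hamen : ∀ (v : V) (d : ℕ),
      Filter.Tendsto
        (fun r : ℕ => (((gBall G v (r + d) \ gBall G v r).ncard : ℝ) / ((gBall G v r).ncard)))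
        Filter.atTop (nhds 0))
    (X : Set V) (v₀ : V) (c : ℝ) (d : ℕ) (w : ℝ)
    (D : V → V → ℝ)
    (hanti : ∀ u v : V, D u v = -D v u)
    (hbound : ∀ u v : V, |D u v| ≤ c)
    (hlocal : ∀ u v : V, (d : ℕ) < G.dist u v → D u v = 0)
    (hcharge : ∀ v : V, w ≤ X.indicator (fun _ => (1 : ℝ)) v + ∑ᶠ u : V, D u v) :
    w ≤ Filter.limsup
        (fun r : ℕ => ((X ∩ gBall G v₀ r).ncard : ℝ) / ((gBall G v₀ r).ncard))
        Filter.atTop := by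
  have hpos : ∀ r, (0 : ℝ) < (gBall G v₀ r).ncard := fun r ↦
    Nat.cast_pos.mpr ((Set.ncard_pos (hfin v₀ r)).mpr ⟨v₀, mem_gBall_self⟩)
  have hdensity_le_one : ∀ r, ((X ∩ gBall G v₀ r).ncard : ℝ) / (gBall G v₀ r).ncard ≤ 1 :=
    fun r ↦ div_le_one_of_le₀ (mod_cast Set.ncard_le_ncard Set.inter_subset_right (hfin v₀ r))
      (hpos r).le
  refine le_limsup_of_le_add_of_tendsto_zero (isBoundedUnder_of ⟨1, hdensity_le_one⟩)
    (by simpa using (hamen v₀ d).const_mul (c * (Δ + 1) ^ d)) (Eventually.of_forall fun r ↦ ?_)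
  rw [mul_div_assoc', ← add_div, le_div_iff₀ (hpos r)]
  exact mul_ncard_gBall_le_add_boundary hc hfin hdeg X hanti hbound hlocal hcharge v₀ r
end

section
/- In the square grid on ℤ², there exists a periodic identifying code of the square grid with density exactly 7/20; in particular, some identifying code X ⊆ ℤ² that is invariant under translation by a finite-index subgroup Λ ≤ ℤ² satisfies |X ∩ D| / |D| = 7/20 for a fundamental domain D of Λ, and its upper density equals 7/20. -/
open Filter

def SF : Finset (ZMod 20) := {0,6,7,9,13,17,19}
def phi (p : ℤ × ℤ) : ZMod 20 := ((2 * p.1 - 3 * p.2 : ℤ) : ZMod 20)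
def Xset : Set (ℤ × ℤ) := {p | phi p ∈ SF}

instance : DecidablePred (· ∈ Xset) := fun p => inferInstanceAs (Decidable (phi p ∈ SF))

lemma phi_add (p q : ℤ × ℤ) : phi (p + q) = phi p + phi q := by
  simp only [phi, Prod.fst_add, Prod.snd_add]
  push_cast
  ring

lemma phi_sub (p q : ℤ × ℤ) : phi (p - q) = phi p - phi q := by
  simp only [phi, Prod.fst_sub, Prod.snd_sub]
  push_cast
  ring

def phiHom : (ℤ × ℤ) →+ ZMod 20 where
  toFun := phi
  map_zero' := by simp [phi]
  map_add' := phi_add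

def rho (p : ℤ × ℤ) : ℤ × ℤ := (-((phi p).val : ℤ), -((phi p).val : ℤ))

lemma phi_neg_diag (k : ℤ) : phi (-k, -k) = (k : ZMod 20) := by
  simp only [phi]
  push_cast
  ring

lemma phi_rho (p : ℤ × ℤ) : phi (rho p) = phi p := by
  rw [rho, phi_neg_diag]
  simp [ZMod.natCast_val, ZMod.cast_id]

lemma rho_natAbs (p : ℤ × ℤ) : (rho p).1.natAbs ≤ 19 ∧ (rho p).2.natAbs ≤ 19 := by
  have h := ZMod.val_lt (phi p)
  simp only [rho]
  constructor <;> simp only [Int.natAbs_neg] <;> omega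

def DF : Finset (ℤ × ℤ) := (Finset.range 20).image (fun k : ℕ => ((-(k:ℤ)), (-(k:ℤ))))

lemma rho_mem_DF (p : ℤ × ℤ) : rho p ∈ DF := by
  rw [DF, Finset.mem_image]
  exact ⟨(phi p).val, Finset.mem_range.2 (ZMod.val_lt _), rfl⟩

lemma DF_card : DF.card = 20 := by decide

lemma DF_unique {q : ℤ × ℤ} (hq : q ∈ DF) (p : ℤ × ℤ) (h : phi q = phi p) : q = rho p := by
  rw [DF, Finset.mem_image] at hq
  obtain ⟨k, hk, rfl⟩ := hq
  rw [Finset.mem_range] at hk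
  rw [phi_neg_diag] at h
  have : ((k : ZMod 20)).val = k := ZMod.val_cast_of_lt hk
  rw [rho]
  push_cast at h
  rw [h] at this
  rw [← this]

lemma DF_natAbs {q : ℤ × ℤ} (hq : q ∈ DF) : q.1.natAbs ≤ 19 ∧ q.2.natAbs ≤ 19 := by
  rw [DF, Finset.mem_image] at hq
  obtain ⟨k, hk, rfl⟩ := hq
  rw [Finset.mem_range] at hk
  constructor <;> simp only [Int.natAbs_neg] <;> omega

noncomputable def ballF (r : ℕ) : Finset (ℤ × ℤ) :=
  ((Finset.Icc (-(r:ℤ)) r) ×ˢ (Finset.Icc (-(r:ℤ)) r)).filter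
    (fun p => p.1.natAbs + p.2.natAbs ≤ r)

lemma mem_ballF {p : ℤ × ℤ} {r : ℕ} : p ∈ ballF r ↔ p.1.natAbs + p.2.natAbs ≤ r := by
  simp only [ballF, Finset.mem_filter, Finset.mem_product, Finset.mem_Icc]
  constructor
  · exact fun h => h.2
  · intro h; refine ⟨⟨?_, ?_⟩, h⟩ <;> omega

lemma ball_coe (r : ℕ) : gridBall 0 r = ↑(ballF r) := by
  ext p
  simp only [gridBall, Set.mem_setOf_eq, Finset.coe_filter, Prod.fst_zero, Prod.snd_zero,
    sub_zero, Finset.mem_coe, mem_ballF]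
  rw [Int.abs_eq_natAbs, Int.abs_eq_natAbs]
  omega

def emb (x : ℤ) : ℤ ↪ ℤ × ℤ := ⟨fun y => (x, y), Prod.mk_right_injective x⟩

lemma ballF_eq (r : ℕ) : ballF r = (Finset.Icc (-(r:ℤ)) r).biUnion
    (fun x => (Finset.Icc (-((r - x.natAbs : ℕ) : ℤ)) ((r - x.natAbs : ℕ) : ℤ)).map (emb x)) := by
  ext p
  simp only [mem_ballF, Finset.mem_biUnion, Finset.mem_Icc, Finset.mem_map, emb,
    Function.Embedding.coeFn_mk]
  constructor
  · intro h
    refine ⟨p.1, by omega, p.2, by omega, rfl⟩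
  · rintro ⟨x, hx, y, hy, rfl⟩
    simp only
    omega

lemma sum_aux (r : ℕ) :
    ∑ x ∈ Finset.Icc (-(r:ℤ)) r, (2 * (r - x.natAbs) + 1) = 2*r^2 + 2*r + 1 := by
  induction r with
  | zero => decide
  | succ r ih =>
    have hins : Finset.Icc (-((r+1:ℕ):ℤ)) ((r+1:ℕ):ℤ) =
        insert (-((r+1:ℕ):ℤ)) (insert ((r+1:ℕ):ℤ) (Finset.Icc (-(r:ℕ):ℤ) (r:ℕ))) := by
      ext x; simp only [Finset.mem_insert, Finset.mem_Icc]; omega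
    rw [hins, Finset.sum_insert, Finset.sum_insert]
    · have h1 : ∑ x ∈ Finset.Icc (-(r:ℕ):ℤ) (r:ℕ), (2 * ((r+1) - x.natAbs) + 1)
          = ∑ x ∈ Finset.Icc (-(r:ℕ):ℤ) (r:ℕ), ((2 * (r - x.natAbs) + 1) + 2) := by
        refine Finset.sum_congr rfl (fun x hx => ?_)
        rw [Finset.mem_Icc] at hx
        omega
      rw [h1, Finset.sum_add_distrib, ih, Finset.sum_const, Int.card_Icc]
      simp only [smul_eq_mul]
      have hsq : (r+1)^2 = r^2+2*r+1 := by ring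
      omega
    · rw [Finset.mem_Icc]; omega
    · simp only [Finset.mem_insert, Finset.mem_Icc]; omega

lemma ballF_card (r : ℕ) : (ballF r).card = 2*r^2 + 2*r + 1 := by
  rw [ballF_eq, Finset.card_biUnion]
  · have h : ∀ x ∈ Finset.Icc (-(r:ℤ)) r,
        ((Finset.Icc (-((r - x.natAbs : ℕ) : ℤ)) ((r - x.natAbs : ℕ) : ℤ)).map (emb x)).card
          = 2 * (r - x.natAbs) + 1 := by
      intro x hx
      rw [Finset.card_map, Int.card_Icc]
      omega
    rw [Finset.sum_congr rfl h, sum_aux]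
  · intro x _ y _ hxy
    simp only [Finset.disjoint_left, Finset.mem_map, emb, Function.Embedding.coeFn_mk]
    rintro p ⟨a, _, rfl⟩ ⟨b, _, hb⟩
    apply hxy
    have h := congrArg Prod.fst hb
    simpa using h.symm

noncomputable def XF (r : ℕ) : Finset (ℤ × ℤ) := (ballF r).filter (· ∈ Xset)
noncomputable def LF (r : ℕ) : Finset (ℤ × ℤ) := (ballF r).filter (fun p => phi p = 0)
def XDF : Finset (ℤ × ℤ) := DF.filter (· ∈ Xset)

lemma XDF_card : XDF.card = 7 := by decide

lemma injA (r : ℕ) (S : Finset (ℤ × ℤ)) (hS : S ⊆ DF) :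
    ((ballF r).filter (fun p => rho p ∈ S)).card ≤ S.card * (LF (r + 38)).card := by
  rw [← Finset.card_product]
  apply Finset.card_le_card_of_injOn (fun p => (rho p, p - rho p))
  · intro p hp
    rw [Finset.mem_coe, Finset.mem_filter] at hp
    obtain ⟨hpb, hpS⟩ := hp
    rw [mem_ballF] at hpb
    rw [Finset.mem_coe, Finset.mem_product]
    refine ⟨hpS, ?_⟩
    rw [LF, Finset.mem_filter, mem_ballF]
    have h1 := rho_natAbs p
    constructor
    · simp only [Prod.fst_sub, Prod.snd_sub]
      omega
    · rw [phi_sub, phi_rho, sub_self]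
  · intro p _ q _ h
    simp only [Prod.mk.injEq] at h
    have := h.2
    rw [h.1] at this
    exact sub_left_injective this

lemma injB (r : ℕ) (S : Finset (ℤ × ℤ)) (hS : S ⊆ DF) :
    S.card * (LF r).card ≤ ((ballF (r + 38)).filter (fun p => rho p ∈ S)).card := by
  rw [← Finset.card_product]
  apply Finset.card_le_card_of_injOn (fun ql => ql.1 + ql.2)
  · rintro ⟨q, l⟩ hql
    rw [Finset.mem_coe, Finset.mem_product] at hql
    obtain ⟨hq, hl⟩ := hql
    dsimp only at hq hl
    rw [LF, Finset.mem_filter, mem_ballF] at hl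
    have hqD := hS hq
    have hqa := DF_natAbs hqD
    rw [Finset.mem_coe, Finset.mem_filter, mem_ballF]
    have hphi : phi (q + l) = phi q := by rw [phi_add, hl.2, add_zero]
    have hrho : rho (q + l) = q := (DF_unique hqD (q + l) (by rw [hphi])).symm
    constructor
    · simp only [Prod.fst_add, Prod.snd_add]
      omega
    · rw [hrho]; exact hq
  · rintro ⟨q, l⟩ hql ⟨q', l'⟩ hql' h
    rw [Finset.mem_coe, Finset.mem_product] at hql hql'
    dsimp only at hql hql' h
    have hq : rho (q + l) = q := by
      have := hS hql.1
      have hl := hql.2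
      rw [LF, Finset.mem_filter] at hl
      exact (DF_unique this (q + l) (by rw [phi_add, hl.2, add_zero])).symm
    have hq' : rho (q' + l') = q' := by
      have := hS hql'.1
      have hl := hql'.2
      rw [LF, Finset.mem_filter] at hl
      exact (DF_unique this (q' + l') (by rw [phi_add, hl.2, add_zero])).symm
    have hqq : q = q' := by rw [← hq, ← hq', h]
    have hll : l = l' := by
      have := h
      rw [hqq] at this
      exact add_left_cancel this
    exact Prod.ext hqq hll

lemma rho_mem_XDF {p : ℤ × ℤ} (hp : p ∈ Xset) : rho p ∈ XDF := by
  rw [XDF, Finset.mem_filter]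
  refine ⟨rho_mem_DF p, ?_⟩
  show phi (rho p) ∈ SF
  rw [phi_rho]
  exact hp

lemma filter_XDF (r : ℕ) : (ballF r).filter (fun p => rho p ∈ XDF) = XF r := by
  ext p
  rw [XF, Finset.mem_filter, Finset.mem_filter]
  constructor
  · rintro ⟨hb, hX⟩
    rw [XDF, Finset.mem_filter] at hX
    refine ⟨hb, ?_⟩
    have : phi (rho p) ∈ SF := hX.2
    rw [phi_rho] at this
    exact this
  · rintro ⟨hb, hX⟩
    exact ⟨hb, rho_mem_XDF hX⟩

lemma filter_DF (r : ℕ) : (ballF r).filter (fun p => rho p ∈ DF) = ballF r := by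
  apply Finset.filter_true_of_mem
  intro p _
  exact rho_mem_DF p

lemma boundA (r : ℕ) : (XF r).card ≤ 7 * (LF (r + 38)).card := by
  have := injA r XDF (Finset.filter_subset _ _)
  rwa [filter_XDF, XDF_card] at this

lemma boundB (r : ℕ) : 7 * (LF r).card ≤ (XF (r + 38)).card := by
  have := injB r XDF (Finset.filter_subset _ _)
  rwa [filter_XDF, XDF_card] at this

lemma boundC (r : ℕ) : (ballF r).card ≤ 20 * (LF (r + 38)).card := by
  have := injA r DF (le_refl _)
  rwa [filter_DF, DF_card] at this

lemma boundD (r : ℕ) : 20 * (LF r).card ≤ (ballF (r + 38)).card := by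
  have := injB r DF (le_refl _)
  rwa [filter_DF, DF_card] at this

lemma sandwich_lo (r : ℕ) (hr : 76 ≤ r) : 7 * (ballF (r - 76)).card ≤ 20 * (XF r).card := by
  have h1 := boundC (r - 76)
  have h2 := boundB (r - 38)
  have e1 : r - 76 + 38 = r - 38 := by omega
  have e2 : r - 38 + 38 = r := by omega
  rw [e1] at h1
  rw [e2] at h2
  calc 7 * (ballF (r - 76)).card ≤ 7 * (20 * (LF (r - 38)).card) :=
        Nat.mul_le_mul_left _ h1
    _ = 20 * (7 * (LF (r - 38)).card) := by ring
    _ ≤ 20 * (XF r).card := Nat.mul_le_mul_left _ h2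

lemma sandwich_hi (r : ℕ) : 20 * (XF r).card ≤ 7 * (ballF (r + 76)).card := by
  have h1 := boundA r
  have h2 := boundD (r + 38)
  have e : r + 38 + 38 = r + 76 := by omega
  rw [e] at h2
  calc 20 * (XF r).card ≤ 20 * (7 * (LF (r + 38)).card) := Nat.mul_le_mul_left _ h1
    _ = 7 * (20 * (LF (r + 38)).card) := by ring
    _ ≤ 7 * (ballF (r + 76)).card := Nat.mul_le_mul_left _ h2

open Topology

lemma tendsto_aux (c : ℝ) :
    Tendsto (fun n : ℕ => (7*(2*((n:ℝ)+c)^2+2*((n:ℝ)+c)+1))/(20*(2*(n:ℝ)^2+2*(n:ℝ)+1)))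
      atTop (𝓝 (7/20)) := by
  have hinv : Tendsto (fun n : ℕ => ((n:ℝ))⁻¹) atTop (𝓝 0) :=
    tendsto_inv_atTop_nhds_zero_nat
  have hnum : Tendsto (fun n : ℕ => 7*(2+(4*c+2)*((n:ℝ))⁻¹+(2*c^2+2*c+1)*((n:ℝ))⁻¹^2))
      atTop (𝓝 14) := by
    have : Tendsto (fun n : ℕ => 2+(4*c+2)*((n:ℝ))⁻¹+(2*c^2+2*c+1)*((n:ℝ))⁻¹^2)
        atTop (𝓝 (2 + (4*c+2)*0 + (2*c^2+2*c+1)*(0^2))) := by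
      exact ((tendsto_const_nhds.add (hinv.const_mul _)).add ((hinv.pow 2).const_mul _))
    have h2 := this.const_mul 7
    norm_num at h2
    convert h2 using 2 <;> ring
  have hden : Tendsto (fun n : ℕ => 20*(2+2*((n:ℝ))⁻¹+((n:ℝ))⁻¹^2)) atTop (𝓝 40) := by
    have : Tendsto (fun n : ℕ => 2+2*((n:ℝ))⁻¹+((n:ℝ))⁻¹^2)
        atTop (𝓝 (2 + 2*0 + 0^2)) := by
      exact ((tendsto_const_nhds.add (hinv.const_mul _)).add (hinv.pow 2))
    have h2 := this.const_mul 20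
    norm_num at h2
    convert h2 using 2 <;> ring
  have hdiv := hnum.div hden (by norm_num : (40:ℝ) ≠ 0)
  have : (14:ℝ)/40 = 7/20 := by norm_num
  rw [this] at hdiv
  apply hdiv.congr'
  filter_upwards [eventually_ge_atTop 1] with n hn
  have hn0 : ((n:ℝ)) ≠ 0 := by
    have : (1:ℝ) ≤ (n:ℝ) := by exact_mod_cast hn
    linarith
  simp only [Pi.div_apply]
  field_simp
  ring

lemma ballF_card_pos (r : ℕ) : 0 < (ballF r).card := by rw [ballF_card]; positivity

lemma ratio_tendsto :
    Tendsto (fun r : ℕ => ((XF r).card : ℝ) / ((ballF r).card : ℝ)) atTop (𝓝 (7/20)) := by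
  apply tendsto_of_tendsto_of_tendsto_of_le_of_le' (tendsto_aux (-76)) (tendsto_aux 76)
  · filter_upwards [eventually_ge_atTop 76] with r hr
    have hs := sandwich_lo r hr
    have hsc : (7:ℝ) * ((ballF (r-76)).card : ℝ) ≤ 20 * ((XF r).card : ℝ) := by
      exact_mod_cast hs
    have hbf : ((ballF r).card : ℝ) = 2*(r:ℝ)^2+2*(r:ℝ)+1 := by
      rw [ballF_card]; push_cast; ring
    have hbf76 : ((ballF (r-76)).card : ℝ) = 2*((r:ℝ)+(-76))^2+2*((r:ℝ)+(-76))+1 := by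
      rw [ballF_card]
      have : ((r - 76 : ℕ) : ℝ) = (r:ℝ) - 76 := by
        push_cast [Nat.cast_sub hr]; ring
      push_cast [this]
      ring
    have hp1 : (0:ℝ) < 20*(2*(r:ℝ)^2+2*(r:ℝ)+1) := by positivity
    have hp2 : (0:ℝ) < ((ballF r).card : ℝ) := by
      exact_mod_cast ballF_card_pos r
    rw [div_le_div_iff₀ hp1 hp2]
    have hBnn : (0:ℝ) ≤ ((ballF r).card : ℝ) := le_of_lt hp2
    have hmul := mul_le_mul_of_nonneg_right hsc hBnn
    nlinarith [hmul, hbf, hbf76]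
  · filter_upwards [eventually_ge_atTop 76] with r hr
    have hs := sandwich_hi r
    have hsc : (20:ℝ) * ((XF r).card : ℝ) ≤ 7 * ((ballF (r+76)).card : ℝ) := by
      exact_mod_cast hs
    have hbf : ((ballF r).card : ℝ) = 2*(r:ℝ)^2+2*(r:ℝ)+1 := by
      rw [ballF_card]; push_cast; ring
    have hbf76 : ((ballF (r+76)).card : ℝ) = 2*((r:ℝ)+76)^2+2*((r:ℝ)+76)+1 := by
      rw [ballF_card]; push_cast; ring
    have hp1 : (0:ℝ) < 20*(2*(r:ℝ)^2+2*(r:ℝ)+1) := by positivity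
    have hp2 : (0:ℝ) < ((ballF r).card : ℝ) := by
      exact_mod_cast ballF_card_pos r
    have hBnn : (0:ℝ) ≤ ((ballF r).card : ℝ) := le_of_lt hp2
    have hmul := mul_le_mul_of_nonneg_right hsc hBnn
    rw [div_le_div_iff₀ hp2 hp1, ← hbf]
    rw [hbf76] at hmul
    linarith [hmul]

lemma Xset_inter_ball (r : ℕ) : Xset ∩ (ballF r : Set (ℤ × ℤ)) = ↑(XF r) := by
  ext p
  simp only [XF, Set.mem_inter_iff, Finset.coe_filter, Set.mem_setOf_eq, Finset.mem_coe]
  tauto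

lemma upperDensity_eq : upperDensity Xset = 7/20 := by
  unfold upperDensity
  have hfun : (fun r : ℕ => ((Xset ∩ gridBall 0 r).ncard : ℝ) / ((gridBall 0 r).ncard))
      = fun r : ℕ => ((XF r).card : ℝ) / ((ballF r).card : ℝ) := by
    funext r
    rw [ball_coe, Xset_inter_ball, Set.ncard_coe_finset, Set.ncard_coe_finset]
  rw [hfun]
  exact ratio_tendsto.limsup_eq

def N0F : Finset (ℤ × ℤ) := {(0,0),(1,0),(-1,0),(0,1),(0,-1)}
def D12F : Finset (ℤ × ℤ) :=
  {(1,0),(-1,0),(0,1),(0,-1),(2,0),(-2,0),(0,2),(0,-2),(1,1),(1,-1),(-1,1),(-1,-1)}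
def EF : Finset (ℤ × ℤ) :=
  {(-3,0),(-2,-1),(-2,0),(-2,1),(-1,-2),(-1,-1),(-1,0),(-1,1),(-1,2),(0,-3),(0,-2),(0,-1),(0,0),
   (0,1),(0,2),(0,3),(1,-2),(1,-1),(1,0),(1,1),(1,2),(2,-1),(2,0),(2,1),(3,0)}

lemma cover : ∀ c : ZMod 20, ∃ e ∈ N0F, c + phi e ∈ SF := by decide

lemma key : ∀ d ∈ D12F, ∀ c : ZMod 20,
    ∃ e ∈ EF, ((e ∈ N0F) ↔ ¬ (e - d ∈ N0F)) ∧ c + phi e ∈ SF := by decide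

lemma mem_N0F (x y : ℤ) : ((x, y) : ℤ × ℤ) ∈ N0F ↔ x.natAbs + y.natAbs ≤ 1 := by
  simp only [N0F, Finset.mem_insert, Finset.mem_singleton, Prod.mk.injEq]
  omega

lemma mem_D12F (x y : ℤ) : ((x, y) : ℤ × ℤ) ∈ D12F ↔
    (x.natAbs + y.natAbs ≤ 2 ∧ ¬(x = 0 ∧ y = 0)) := by
  simp only [D12F, Finset.mem_insert, Finset.mem_singleton, Prod.mk.injEq]
  omega

lemma mem_nbhd (p v : ℤ × ℤ) : p ∈ gridNbhd v ↔ (p.1 - v.1, p.2 - v.2) ∈ N0F := by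
  simp only [gridNbhd, N0F, Set.mem_insert_iff, Set.mem_singleton_iff,
    Finset.mem_insert, Finset.mem_singleton, Prod.mk.injEq, Prod.ext_iff]
  omega

lemma nbhd_nonempty (v : ℤ × ℤ) : (gridNbhd v ∩ Xset).Nonempty := by
  obtain ⟨e, heN, heS⟩ := cover (phi v)
  refine ⟨v + e, ?_, ?_⟩
  · rw [mem_nbhd]
    have : ((v + e).1 - v.1, (v + e).2 - v.2) = e := by
      simp only [Prod.fst_add, Prod.snd_add, add_sub_cancel_left]
    rwa [this]
  · show phi (v + e) ∈ SF
    rw [phi_add]; exact heS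

lemma distinguish (u v : ℤ × ℤ) (huv : u ≠ v) : gridNbhd u ∩ Xset ≠ gridNbhd v ∩ Xset := by
  intro h
  obtain ⟨w, hwN, hwX⟩ := nbhd_nonempty u
  have hwv : w ∈ gridNbhd v ∩ Xset := by rw [← h]; exact ⟨hwN, hwX⟩
  have h1 := (mem_nbhd w u).1 hwN
  have h2 := (mem_nbhd w v).1 hwv.1
  have hd : ((v.1 - u.1, v.2 - u.2) : ℤ × ℤ) ∈ D12F := by
    rw [mem_N0F] at h1 h2
    rw [mem_D12F]
    refine ⟨by omega, ?_⟩
    rintro ⟨a, b⟩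
    exact huv (Prod.ext_iff.2 ⟨by omega, by omega⟩)
  obtain ⟨e, heE, hiff, hS⟩ := key (v.1 - u.1, v.2 - u.2) hd (phi u)
  have hXue : u + e ∈ Xset := by
    show phi (u + e) ∈ SF
    rw [phi_add]; exact hS
  have hsub1 : ((u + e).1 - u.1, (u + e).2 - u.2) = e := by
    simp only [Prod.fst_add, Prod.snd_add, add_sub_cancel_left]
  have hsub2 : ((u + e).1 - v.1, (u + e).2 - v.2) = e - (v.1 - u.1, v.2 - u.2) := by
    simp only [Prod.ext_iff, Prod.fst_add, Prod.snd_add, Prod.fst_sub, Prod.snd_sub,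
      Prod.mk.injEq]
    constructor <;> ring
  by_cases he : e ∈ N0F
  · have hnd : e - (v.1 - u.1, v.2 - u.2) ∉ N0F := hiff.1 he
    have hmem : u + e ∈ gridNbhd u ∩ Xset := ⟨(mem_nbhd _ _).2 (by rw [hsub1]; exact he), hXue⟩
    rw [h] at hmem
    have hm := (mem_nbhd _ _).1 hmem.1
    rw [hsub2] at hm
    exact hnd hm
  · have hed : e - (v.1 - u.1, v.2 - u.2) ∈ N0F := by
      by_contra hh
      exact he (hiff.2 hh)
    have hmem : u + e ∈ gridNbhd v ∩ Xset := ⟨(mem_nbhd _ _).2 (by rw [hsub2]; exact hed), hXue⟩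
    rw [← h] at hmem
    have hm := (mem_nbhd _ _).1 hmem.1
    rw [hsub1] at hm
    exact he hm

lemma phi_surj : Function.Surjective phiHom := by
  intro c
  refine ⟨(-(c.val : ℤ), -(c.val : ℤ)), ?_⟩
  show phi _ = c
  rw [phi_neg_diag]
  simp [ZMod.natCast_val, ZMod.cast_id]

lemma ker_index : phiHom.ker.index = 20 := by
  have e := QuotientAddGroup.quotientKerEquivOfSurjective phiHom phi_surj
  have h := Nat.card_congr e.toEquiv
  rw [Nat.card_zmod] at h
  exact h

lemma Xset_inter_DF : Xset ∩ (DF : Set (ℤ × ℤ)) = ↑XDF := by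
  ext p
  simp only [XDF, Set.mem_inter_iff, Finset.coe_filter, Set.mem_setOf_eq, Finset.mem_coe]
  tauto

/-- There is a periodic identifying code of the square grid of density exactly
`7/20`: it is invariant under a finite-index subgroup `Λ ≤ ℤ²`, occupies a
`7/20` fraction of a fundamental domain of `Λ`, and has upper density `7/20`. -/
theorem stmt_17 :
    ∃ (X : Set (ℤ × ℤ)) (Λ : AddSubgroup (ℤ × ℤ)) (D : Finset (ℤ × ℤ)),
      ((∀ v : ℤ × ℤ, (gridNbhd v ∩ X).Nonempty) ∧
        ∀ u v : ℤ × ℤ, u ≠ v → gridNbhd u ∩ X ≠ gridNbhd v ∩ X) ∧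
      (∀ l ∈ Λ, ∀ p : ℤ × ℤ, p + l ∈ X ↔ p ∈ X) ∧
      Λ.index ≠ 0 ∧
      (∀ p : ℤ × ℤ, ∃! q : ℤ × ℤ, q ∈ D ∧ p - q ∈ Λ) ∧
      ((X ∩ (D : Set (ℤ × ℤ))).ncard : ℝ) / (D.card : ℝ) = 7 / 20 ∧
      upperDensity X = 7 / 20 := by
  refine ⟨Xset, phiHom.ker, DF, ⟨nbhd_nonempty, distinguish⟩, ?_, ?_, ?_, ?_, upperDensity_eq⟩
  · intro l hl p
    rw [AddMonoidHom.mem_ker] at hl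
    show phi (p + l) ∈ SF ↔ phi p ∈ SF
    rw [phi_add]
    have : phi l = 0 := hl
    rw [this, add_zero]
  · rw [ker_index]; norm_num
  · intro p
    refine ⟨rho p, ⟨rho_mem_DF p, ?_⟩, ?_⟩
    · rw [AddMonoidHom.mem_ker]
      show phi (p - rho p) = 0
      rw [phi_sub, phi_rho, sub_self]
    · rintro q ⟨hqD, hql⟩
      rw [AddMonoidHom.mem_ker] at hql
      have hql' : phi (p - q) = 0 := hql
      rw [phi_sub, sub_eq_zero] at hql'
      exact DF_unique hqD p hql'.symm
  · rw [Xset_inter_DF, Set.ncard_coe_finset, XDF_card, DF_card]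
    norm_num
end
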